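/- The value of the correlation maximization problem with mean-independence constraint, sup{𝔼(V·Y) : Law(V)=uniform on [0,1], 𝔼(X|V)=0}, coincides with sup{𝔼(∫₀¹ U_t Y dt)} taken over families (U_t)_{t∈[0,1]} of random variables such that t↦U_t is nonincreasing, U_t takes values in {0,1}, 𝔼(U_t) = 1−t, and 𝔼(U_t X) = 0 for every t. -/

import Mathlib

/-!
The two sets of values coincide. An admissible `V` gives the admissible family `U_t = 1_{t ≤ V}`,
with `∫₀¹ U_t dt = V`. Conversely, put `V = ∫₀¹ U_t dt`; since `t ↦ U_t` is a nonincreasing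
indicator, `{V > t} ⊆ {U_t = 1} ⊆ {V ≥ t}`. Together with `𝔼 U_t = 1 - t` this forces
`P(V > t) = 1 - t`, so `V` is uniform and `{U_t = 1} = {V > t}` almost surely. Then `𝔼(U_t X) = 0`
says that `X` integrates to zero over each `{V > t}`; these sets form a π-system generating `σ(V)`,
so `𝔼(X | V) = 0`.
-/

open MeasureTheory ProbabilityTheory Set

noncomputable section

section MeanIndependence

variable {Ω β E : Type*} [MeasurableSpace Ω] [MeasurableSpace β] [NormedAddCommGroup E]
  [NormedSpace ℝ E] {P : Measure Ω} {X : Ω → E}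

theorem condExp_comap_ae_eq_zero_iff [CompleteSpace E] [IsFiniteMeasure P] {V : Ω → β}
    (hV : Measurable V) (hX : Integrable X P) :
    P[X | MeasurableSpace.comap V inferInstance] =ᵐ[P] 0 ↔
      ∀ B, MeasurableSet B → ∫ ω in V ⁻¹' B, X ω ∂P = 0 := by
  constructor
  · intro h B hB
    rw [← setIntegral_condExp hV.comap_le hX ⟨B, hB, rfl⟩,
      setIntegral_congr_ae (hV hB) (h.mono fun _ h _ => h)]
    simp
  · intro h
    refine (ae_eq_condExp_of_forall_setIntegral_eq hV.comap_le hX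
      (fun _ _ _ => integrableOn_zero) ?_ aestronglyMeasurable_const).symm
    rintro _ ⟨B, hB, rfl⟩ _
    simp [h B hB]

theorem setIntegral_preimage_eq_zero_of_forall_Ioi {V : Ω → ℝ} (hV : Measurable V)
    (hX : Integrable X P) (h0 : ∫ ω, X ω ∂P = 0)
    (hIoi : ∀ a, ∫ ω in V ⁻¹' Ioi a, X ω ∂P = 0) {B : Set ℝ} (hB : MeasurableSet B) :
    ∫ ω in V ⁻¹' B, X ω ∂P = 0 := by
  induction B, hB using MeasurableSpace.induction_on_inter
    (BorelSpace.measurable_eq.trans (borel_eq_generateFrom_Ioi ℝ)) isPiSystem_Ioi with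
  | empty => simp
  | basic _ hB => obtain ⟨a, rfl⟩ := hB; exact hIoi a
  | compl B hB ih =>
    have := integral_add_compl (hV hB) hX
    rwa [ih, h0, zero_add] at this
  | iUnion B hdisj hB ih =>
    rw [preimage_iUnion, integral_iUnion (fun i => hV (hB i))
      (fun i j hij => (hdisj hij).preimage V) hX.integrableOn]
    simp [ih]

end MeanIndependence

section UniformLaw

variable {Ω : Type*} [MeasurableSpace Ω] {P : Measure Ω} {V : Ω → ℝ}

theorem MeasureTheory.Measure.ext_of_Ioi_of_isProbabilityMeasure (μ ν : Measure ℝ)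
    [IsProbabilityMeasure μ] [IsProbabilityMeasure ν] (h : ∀ a, μ (Ioi a) = ν (Ioi a)) : μ = ν :=
  Measure.ext_of_Iic μ ν fun a => by
    rw [← compl_Ioi, prob_compl_eq_one_sub measurableSet_Ioi,
      prob_compl_eq_one_sub measurableSet_Ioi, h]

theorem ae_mem_Icc_of_map_eq_uniform (hV : Measurable V)
    (hlaw : P.map V = volume.restrict (Icc 0 1)) : ∀ᵐ ω ∂P, V ω ∈ Icc (0 : ℝ) 1 :=
  ae_of_ae_map hV.aemeasurable (hlaw ▸ ae_restrict_mem measurableSet_Icc)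

theorem measureReal_preimage_Ici_of_map_eq_uniform (hV : Measurable V)
    (hlaw : P.map V = volume.restrict (Icc 0 1)) {t : ℝ} (ht : t ∈ Icc (0 : ℝ) 1) :
    P.real (V ⁻¹' Ici t) = 1 - t := by
  have hinter : Ici t ∩ Icc 0 1 = Icc t 1 :=
    Set.ext fun x => ⟨fun ⟨hx, _, h1⟩ => ⟨hx, h1⟩, fun ⟨hx, h1⟩ => ⟨hx, ht.1.trans hx, h1⟩⟩
  rw [measureReal_def, ← Measure.map_apply hV measurableSet_Ici, hlaw,
    Measure.restrict_apply measurableSet_Ici, hinter, Real.volume_Icc,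
    ENNReal.toReal_ofReal (by linarith [ht.2])]

theorem measureReal_preimage_Ioi_eq_of_le_of_le [IsFiniteMeasure P]
    (hIoi : ∀ t ∈ Icc (0 : ℝ) 1, P.real (V ⁻¹' Ioi t) ≤ 1 - t)
    (hIci : ∀ t ∈ Icc (0 : ℝ) 1, 1 - t ≤ P.real (V ⁻¹' Ici t)) {t : ℝ} (ht : t ∈ Icc (0 : ℝ) 1) :
    P.real (V ⁻¹' Ioi t) = 1 - t := by
  -- `{V > t}` contains every `{V ≥ s}` with `s > t`
  refine (hIoi t ht).antisymm (le_of_forall_lt_imp_le_of_dense fun c hc => ?_)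
  rcases lt_or_ge c 0 with hc0 | hc0
  · exact hc0.le.trans measureReal_nonneg
  · calc c = 1 - (1 - c) := by ring
      _ ≤ P.real (V ⁻¹' Ici (1 - c)) := hIci _ ⟨by linarith [ht.1], by linarith⟩
      _ ≤ P.real (V ⁻¹' Ioi t) :=
        measureReal_mono (preimage_mono (Ici_subset_Ioi.2 (by linarith)))

theorem map_eq_uniform_of_measureReal_preimage_Ioi [IsProbabilityMeasure P] (hV : Measurable V)
    (hV01 : ∀ ω, V ω ∈ Icc (0 : ℝ) 1)
    (hIoi : ∀ t ∈ Icc (0 : ℝ) 1, P.real (V ⁻¹' Ioi t) = 1 - t) :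
    P.map V = volume.restrict (Icc 0 1) := by
  have : IsProbabilityMeasure (P.map V) := Measure.isProbabilityMeasure_map hV.aemeasurable
  have : IsProbabilityMeasure (volume.restrict (Icc (0 : ℝ) 1)) := ⟨by simp⟩
  refine Measure.ext_of_Ioi_of_isProbabilityMeasure _ _ fun a => ?_
  rw [Measure.map_apply hV measurableSet_Ioi, Measure.restrict_apply measurableSet_Ioi]
  rcases lt_or_ge a 0 with ha0 | ha0
  · rw [show V ⁻¹' Ioi a = univ from eq_univ_of_forall fun ω => ha0.trans_le (hV01 ω).1,
      show Ioi a ∩ Icc 0 1 = Icc 0 1 from inter_eq_right.2 fun x hx => ha0.trans_le hx.1]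
    simp
  rcases le_or_gt a 1 with ha1 | ha1
  · have hinter : Ioi a ∩ Icc 0 1 = Ioc a 1 :=
      Set.ext fun x => ⟨fun ⟨hx, _, h1⟩ => ⟨hx, h1⟩, fun ⟨hx, h1⟩ => ⟨hx, ha0.trans hx.le, h1⟩⟩
    rw [← ofReal_measureReal, hIoi a ⟨ha0, ha1⟩, hinter, Real.volume_Ioc]
  · rw [show V ⁻¹' Ioi a = ∅ from
        eq_empty_of_forall_notMem fun ω hω => (hV01 ω).2.not_gt (ha1.trans hω),
      show Ioi a ∩ Icc 0 1 = ∅ from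
        eq_empty_of_forall_notMem fun x hx => hx.2.2.not_gt (ha1.trans hx.1)]
    simp

end UniformLaw

section AntitoneOnUnitInterval

variable {f : ℝ → ℝ} {t : ℝ}

theorem intervalIntegral_indicator_Iic_one {v : ℝ} (hv : v ∈ Icc (0 : ℝ) 1) :
    ∫ s in (0 : ℝ)..1, (Iic v).indicator 1 s = v := by
  rw [show (Iic v).indicator (1 : ℝ → ℝ) = {s | s ≤ v}.indicator (fun _ => 1) from rfl,
    intervalIntegral.integral_indicator hv]
  simp

theorem intervalIntegrable_indicator_Iic_one (v : ℝ) :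
    IntervalIntegrable ((Iic v).indicator (1 : ℝ → ℝ)) volume 0 1 :=
  (intervalIntegrable_const (c := (1 : ℝ))).mono_fun
    ((measurable_one.indicator measurableSet_Iic).aestronglyMeasurable) (ae_of_all _ fun s => by
      by_cases hs : s ≤ v <;> simp [indicator, hs])

theorem AntitoneOn.intervalIntegral_le_of_apply_eq_zero (hf : AntitoneOn f (Icc 0 1))
    (hf1 : ∀ s ∈ Icc (0 : ℝ) 1, f s ≤ 1) (ht : t ∈ Icc (0 : ℝ) 1) (h0 : f t = 0) :
    ∫ s in (0 : ℝ)..1, f s ≤ t := by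
  calc ∫ s in (0 : ℝ)..1, f s ≤ ∫ s in (0 : ℝ)..1, (Iic t).indicator 1 s :=
        intervalIntegral.integral_mono_on zero_le_one
          (uIcc_of_le (zero_le_one (α := ℝ)) ▸ hf).intervalIntegrable
          (intervalIntegrable_indicator_Iic_one t) fun s hs => ?_
    _ = t := intervalIntegral_indicator_Iic_one ht
  by_cases hst : s ≤ t
  · simpa [hst] using hf1 s hs
  · simpa [hst, h0] using hf ht hs (not_le.1 hst).le

theorem AntitoneOn.le_intervalIntegral_of_apply_eq_one (hf : AntitoneOn f (Icc 0 1))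
    (hf0 : ∀ s ∈ Icc (0 : ℝ) 1, 0 ≤ f s) (ht : t ∈ Icc (0 : ℝ) 1) (h1 : f t = 1) :
    t ≤ ∫ s in (0 : ℝ)..1, f s := by
  calc t = ∫ s in (0 : ℝ)..1, (Iic t).indicator 1 s :=
        (intervalIntegral_indicator_Iic_one ht).symm
    _ ≤ ∫ s in (0 : ℝ)..1, f s :=
        intervalIntegral.integral_mono_on zero_le_one (intervalIntegrable_indicator_Iic_one t)
          (uIcc_of_le (zero_le_one (α := ℝ)) ▸ hf).intervalIntegrable fun s hs => ?_
  by_cases hst : s ≤ t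
  · simpa [hst, h1] using hf hs ht hst
  · simpa [hst] using hf0 s hs

end AntitoneOnUnitInterval

section IndicatorFamilies

variable {Ω E : Type*}

def superlevelIndicator (V : Ω → ℝ) (t : ℝ) : Ω → ℝ := (V ⁻¹' Ici t).indicator 1

theorem antitone_superlevelIndicator (V : Ω → ℝ) (ω : Ω) :
    Antitone fun t => superlevelIndicator V t ω := fun s t hst => by
  by_cases ht : t ≤ V ω
  · simp [superlevelIndicator, indicator, ht, hst.trans ht]
  · by_cases hs : s ≤ V ω <;> simp [superlevelIndicator, indicator, ht, hs]

theorem superlevelIndicator_eq_zero_or_one (V : Ω → ℝ) (t : ℝ) (ω : Ω) :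
    superlevelIndicator V t ω = 0 ∨ superlevelIndicator V t ω = 1 := by
  by_cases h : t ≤ V ω <;> simp [superlevelIndicator, indicator, h]

variable [MeasurableSpace Ω] [NormedAddCommGroup E] [NormedSpace ℝ E] {P : Measure Ω}

theorem integral_eq_measureReal_setOf_eq_one {u : Ω → ℝ} (hu : Measurable u)
    (h01 : ∀ ω, u ω = 0 ∨ u ω = 1) : ∫ ω, u ω ∂P = P.real {ω | u ω = 1} := by
  have hs : MeasurableSet {ω | u ω = 1} := hu (measurableSet_singleton 1)
  rw [← integral_indicator_one hs]
  congr 1 with ω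
  rcases h01 ω with h | h <;> simp [indicator, h]

theorem integral_smul_eq_setIntegral_setOf_eq_one {u : Ω → ℝ} (hu : Measurable u)
    (h01 : ∀ ω, u ω = 0 ∨ u ω = 1) (X : Ω → E) :
    ∫ ω, u ω • X ω ∂P = ∫ ω in {ω | u ω = 1}, X ω ∂P := by
  have hs : MeasurableSet {ω | u ω = 1} := hu (measurableSet_singleton 1)
  rw [← integral_indicator hs]
  congr 1 with ω
  rcases h01 ω with h | h <;> simp [indicator, h]

variable {V : Ω → ℝ}

theorem measurable_uncurry_superlevelIndicator (hV : Measurable V) :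
    Measurable (Function.uncurry (superlevelIndicator V)) :=
  measurable_const.indicator (measurableSet_le measurable_fst (hV.comp measurable_snd))

theorem integral_superlevelIndicator (hV : Measurable V) (t : ℝ) :
    ∫ ω, superlevelIndicator V t ω ∂P = P.real (V ⁻¹' Ici t) :=
  integral_indicator_one (hV measurableSet_Ici)

theorem integral_superlevelIndicator_smul (hV : Measurable V) (t : ℝ) (X : Ω → E) :
    ∫ ω, superlevelIndicator V t ω • X ω ∂P = ∫ ω in V ⁻¹' Ici t, X ω ∂P := by
  rw [← integral_indicator (hV measurableSet_Ici)]
  congr 1 with ω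
  by_cases h : t ≤ V ω <;> simp [superlevelIndicator, indicator, h]

end IndicatorFamilies

section UnitIntervalIntegral

variable {Ω E : Type*}

def unitIntervalIntegral (U : ℝ → Ω → ℝ) (ω : Ω) : ℝ := ∫ t in (0 : ℝ)..1, U t ω

theorem unitIntervalIntegral_superlevelIndicator {V : Ω → ℝ} {ω : Ω}
    (hω : V ω ∈ Icc (0 : ℝ) 1) : unitIntervalIntegral (superlevelIndicator V) ω = V ω :=
  intervalIntegral_indicator_Iic_one hω

variable {U : ℝ → Ω → ℝ}

theorem unitIntervalIntegral_mem_Icc (h01 : ∀ t ∈ Icc (0 : ℝ) 1, ∀ ω, U t ω = 0 ∨ U t ω = 1)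
    (ω : Ω) : unitIntervalIntegral U ω ∈ Icc (0 : ℝ) 1 := by
  have hU01 : ∀ t ∈ Icc (0 : ℝ) 1, U t ω ∈ Icc (0 : ℝ) 1 := fun t ht => by
    rcases h01 t ht ω with h | h <;> simp [h]
  refine ⟨intervalIntegral.integral_nonneg zero_le_one fun t ht => (hU01 t ht).1, ?_⟩
  calc unitIntervalIntegral U ω ≤ ‖unitIntervalIntegral U ω‖ := Real.le_norm_self _
    _ ≤ 1 * |1 - 0| := intervalIntegral.norm_integral_le_of_norm_le_const fun t ht => by
        have := hU01 t (Ioc_subset_Icc_self (by simpa using ht))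
        rw [Real.norm_of_nonneg this.1]
        exact this.2
    _ = 1 := by simp

theorem unitIntervalIntegral_preimage_Ioi_subset (hanti : ∀ ω, AntitoneOn (U · ω) (Icc 0 1))
    (h01 : ∀ t ∈ Icc (0 : ℝ) 1, ∀ ω, U t ω = 0 ∨ U t ω = 1) {t : ℝ} (ht : t ∈ Icc (0 : ℝ) 1) :
    unitIntervalIntegral U ⁻¹' Ioi t ⊆ {ω | U t ω = 1} := fun ω hω =>
  (h01 t ht ω).resolve_left fun h0 =>
    ((hanti ω).intervalIntegral_le_of_apply_eq_zero
      (fun s hs => by rcases h01 s hs ω with h | h <;> simp [h]) ht h0).not_gt hω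

theorem setOf_eq_one_subset_unitIntervalIntegral_preimage_Ici
    (hanti : ∀ ω, AntitoneOn (U · ω) (Icc 0 1))
    (h01 : ∀ t ∈ Icc (0 : ℝ) 1, ∀ ω, U t ω = 0 ∨ U t ω = 1) {t : ℝ} (ht : t ∈ Icc (0 : ℝ) 1) :
    {ω | U t ω = 1} ⊆ unitIntervalIntegral U ⁻¹' Ici t := fun ω hω =>
  (hanti ω).le_intervalIntegral_of_apply_eq_one
    (fun s hs => by rcases h01 s hs ω with h | h <;> simp [h]) ht hω

variable [MeasurableSpace Ω] [NormedAddCommGroup E] [NormedSpace ℝ E] {P : Measure Ω}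

theorem measurable_unitIntervalIntegral (hU : Measurable (Function.uncurry U)) :
    Measurable (unitIntervalIntegral U) := by
  have hIoc : unitIntervalIntegral U = fun ω => ∫ t in Ioc 0 1, U t ω :=
    funext fun _ => intervalIntegral.integral_of_le zero_le_one
  rw [hIoc]
  exact (StronglyMeasurable.integral_prod_right (f := fun ω t => U t ω)
    (hU.comp measurable_swap).stronglyMeasurable).measurable

theorem measureReal_setOf_eq_one (hU : Measurable (Function.uncurry U))
    (h01 : ∀ t ∈ Icc (0 : ℝ) 1, ∀ ω, U t ω = 0 ∨ U t ω = 1)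
    (hmean : ∀ t ∈ Icc (0 : ℝ) 1, ∫ ω, U t ω ∂P = 1 - t) {t : ℝ} (ht : t ∈ Icc (0 : ℝ) 1) :
    P.real {ω | U t ω = 1} = 1 - t :=
  (integral_eq_measureReal_setOf_eq_one hU.of_uncurry_left (h01 t ht)).symm.trans (hmean t ht)

theorem measureReal_unitIntervalIntegral_preimage_Ioi [IsFiniteMeasure P]
    (hU : Measurable (Function.uncurry U)) (hanti : ∀ ω, AntitoneOn (U · ω) (Icc 0 1))
    (h01 : ∀ t ∈ Icc (0 : ℝ) 1, ∀ ω, U t ω = 0 ∨ U t ω = 1)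
    (hmean : ∀ t ∈ Icc (0 : ℝ) 1, ∫ ω, U t ω ∂P = 1 - t) {t : ℝ} (ht : t ∈ Icc (0 : ℝ) 1) :
    P.real (unitIntervalIntegral U ⁻¹' Ioi t) = 1 - t := by
  refine measureReal_preimage_Ioi_eq_of_le_of_le (fun s hs => ?_) (fun s hs => ?_) ht
  · rw [← measureReal_setOf_eq_one hU h01 hmean hs]
    exact measureReal_mono (unitIntervalIntegral_preimage_Ioi_subset hanti h01 hs)
  · rw [← measureReal_setOf_eq_one hU h01 hmean hs]
    exact measureReal_mono (setOf_eq_one_subset_unitIntervalIntegral_preimage_Ici hanti h01 hs)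

theorem map_unitIntervalIntegral_eq_uniform [IsProbabilityMeasure P]
    (hU : Measurable (Function.uncurry U)) (hanti : ∀ ω, AntitoneOn (U · ω) (Icc 0 1))
    (h01 : ∀ t ∈ Icc (0 : ℝ) 1, ∀ ω, U t ω = 0 ∨ U t ω = 1)
    (hmean : ∀ t ∈ Icc (0 : ℝ) 1, ∫ ω, U t ω ∂P = 1 - t) :
    P.map (unitIntervalIntegral U) = volume.restrict (Icc 0 1) :=
  map_eq_uniform_of_measureReal_preimage_Ioi (measurable_unitIntervalIntegral hU)
    (unitIntervalIntegral_mem_Icc h01)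
    fun _ => measureReal_unitIntervalIntegral_preimage_Ioi hU hanti h01 hmean

theorem condExp_comap_unitIntervalIntegral_ae_eq_zero [CompleteSpace E] [IsFiniteMeasure P]
    {X : Ω → E} (hX : Integrable X P) (hX0 : ∫ ω, X ω ∂P = 0)
    (hU : Measurable (Function.uncurry U)) (hanti : ∀ ω, AntitoneOn (U · ω) (Icc 0 1))
    (h01 : ∀ t ∈ Icc (0 : ℝ) 1, ∀ ω, U t ω = 0 ∨ U t ω = 1)
    (hmean : ∀ t ∈ Icc (0 : ℝ) 1, ∫ ω, U t ω ∂P = 1 - t)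
    (horth : ∀ t ∈ Icc (0 : ℝ) 1, ∫ ω, U t ω • X ω ∂P = 0) :
    P[X | MeasurableSpace.comap (unitIntervalIntegral U) inferInstance] =ᵐ[P] 0 := by
  set V := unitIntervalIntegral U
  have hV : Measurable V := measurable_unitIntervalIntegral hU
  refine (condExp_comap_ae_eq_zero_iff hV hX).2 fun B hB =>
    setIntegral_preimage_eq_zero_of_forall_Ioi hV hX hX0 (fun a => ?_) hB
  rcases lt_or_ge a 0 with ha0 | ha0
  · rwa [show V ⁻¹' Ioi a = univ from
      eq_univ_of_forall fun ω => ha0.trans_le (unitIntervalIntegral_mem_Icc h01 ω).1,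
      Measure.restrict_univ]
  rcases le_or_gt a 1 with ha1 | ha1
  · have ha : a ∈ Icc (0 : ℝ) 1 := ⟨ha0, ha1⟩
    have hae : V ⁻¹' Ioi a =ᵐ[P] {ω | U a ω = 1} := by
      refine ae_eq_of_subset_of_measure_ge (unitIntervalIntegral_preimage_Ioi_subset hanti h01 ha)
        ?_ (hV measurableSet_Ioi).nullMeasurableSet (measure_ne_top _ _)
      rw [← ofReal_measureReal, ← ofReal_measureReal, measureReal_setOf_eq_one hU h01 hmean ha,
        measureReal_unitIntervalIntegral_preimage_Ioi hU hanti h01 hmean ha]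
    rw [setIntegral_congr_set hae,
      ← integral_smul_eq_setIntegral_setOf_eq_one hU.of_uncurry_left (h01 a ha), horth a ha]
  · rw [show V ⁻¹' Ioi a = ∅ from eq_empty_of_forall_notMem fun ω hω =>
      (unitIntervalIntegral_mem_Icc h01 ω).2.not_gt (ha1.trans hω),
      Measure.restrict_empty, integral_zero_measure]

end UnitIntervalIntegral

theorem correlation_maximization_eq_monotone_indicator_families_general
    {Ωs : Type*} [MeasurableSpace Ωs] (P : Measure Ωs) [IsProbabilityMeasure P]
    {N : ℕ}
    (X : Ωs → EuclideanSpace ℝ (Fin N)) (Y : Ωs → ℝ)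
    (hX : Measurable X)
    (hXbdd : ∃ C : ℝ, ∀ ω, ‖X ω‖ ≤ C)
    (hXcentered : ∫ ω, X ω ∂P = 0) :
    sSup {r : ℝ | ∃ V : Ωs → ℝ, Measurable V ∧
      Measure.map V P = volume.restrict (Icc (0:ℝ) 1) ∧
      P[X | MeasurableSpace.comap V inferInstance] =ᵐ[P] 0 ∧
      r = ∫ ω, V ω * Y ω ∂P} =
    sSup {r : ℝ | ∃ U : ℝ → Ωs → ℝ,
      Measurable (Function.uncurry U) ∧
      (∀ ω, AntitoneOn (fun t => U t ω) (Icc (0:ℝ) 1)) ∧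
      (∀ t ∈ Icc (0:ℝ) 1, ∀ ω, U t ω = 0 ∨ U t ω = 1) ∧
      (∀ t ∈ Icc (0:ℝ) 1, ∫ ω, U t ω ∂P = 1 - t) ∧
      (∀ t ∈ Icc (0:ℝ) 1, ∫ ω, U t ω • X ω ∂P = 0) ∧
      r = ∫ ω, (∫ t in (0:ℝ)..1, U t ω * Y ω) ∂P} := by
  obtain ⟨C, hC⟩ := hXbdd
  have hXint : Integrable X P := (integrable_const C).mono' hX.aestronglyMeasurable (ae_of_all _ hC)
  congr 1
  ext r
  constructor
  · rintro ⟨V, hV, hlaw, hce, rfl⟩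
    refine ⟨superlevelIndicator V, measurable_uncurry_superlevelIndicator hV,
      fun ω => (antitone_superlevelIndicator V ω).antitoneOn _,
      fun t _ => superlevelIndicator_eq_zero_or_one V t,
      fun t ht => (integral_superlevelIndicator hV t).trans
        (measureReal_preimage_Ici_of_map_eq_uniform hV hlaw ht),
      fun t _ => (integral_superlevelIndicator_smul hV t X).trans
        ((condExp_comap_ae_eq_zero_iff hV hXint).1 hce _ measurableSet_Ici), integral_congr_ae ?_⟩
    filter_upwards [ae_mem_Icc_of_map_eq_uniform hV hlaw] with ω hω
    rw [intervalIntegral.integral_mul_const]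
    exact congrArg (· * Y ω) (unitIntervalIntegral_superlevelIndicator hω).symm
  · rintro ⟨U, hU, hanti, h01, hmean, horth, rfl⟩
    refine ⟨unitIntervalIntegral U, measurable_unitIntervalIntegral hU,
      map_unitIntervalIntegral_eq_uniform hU hanti h01 hmean,
      condExp_comap_unitIntervalIntegral_ae_eq_zero hXint hXcentered hU hanti h01 hmean horth,
      integral_congr_ae (ae_of_all _ fun _ => intervalIntegral.integral_mul_const _ _)⟩

/-- The value of the correlation maximization problem with mean-independence
constraint, `sup { 𝔼(V·Y) : Law(V) = uniform[0,1], 𝔼(X|V) = 0 }`, coincides with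
`sup 𝔼(∫₀¹ U_t Y dt)` over families `(U_t)` with `t ↦ U_t` nonincreasing, `U_t ∈ {0,1}`,
`𝔼(U_t) = 1 − t` and `𝔼(U_t X) = 0` for every `t ∈ [0,1]`. -/
theorem correlation_maximization_eq_monotone_indicator_families
    {Ωs : Type*} [MeasurableSpace Ωs] (P : Measure Ωs) [IsProbabilityMeasure P]
    {N : ℕ}
    (X : Ωs → EuclideanSpace ℝ (Fin N)) (Y : Ωs → ℝ)
    (hX : Measurable X) (hY : Measurable Y)
    (hXbdd : ∃ C : ℝ, ∀ ω, ‖X ω‖ ≤ C) (hYbdd : ∃ C : ℝ, ∀ ω, |Y ω| ≤ C)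
    (hXcentered : ∫ ω, X ω ∂P = 0) :
    sSup {r : ℝ | ∃ V : Ωs → ℝ, Measurable V ∧
      Measure.map V P = volume.restrict (Icc (0:ℝ) 1) ∧
      P[X | MeasurableSpace.comap V inferInstance] =ᵐ[P] 0 ∧
      r = ∫ ω, V ω * Y ω ∂P} =
    sSup {r : ℝ | ∃ U : ℝ → Ωs → ℝ,
      Measurable (Function.uncurry U) ∧
      (∀ ω, AntitoneOn (fun t => U t ω) (Icc (0:ℝ) 1)) ∧
      (∀ t ∈ Icc (0:ℝ) 1, ∀ ω, U t ω = 0 ∨ U t ω = 1) ∧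
      (∀ t ∈ Icc (0:ℝ) 1, ∫ ω, U t ω ∂P = 1 - t) ∧
      (∀ t ∈ Icc (0:ℝ) 1, ∫ ω, U t ω • X ω ∂P = 0) ∧
      r = ∫ ω, (∫ t in (0:ℝ)..1, U t ω * Y ω) ∂P} :=
  correlation_maximization_eq_monotone_indicator_families_general P X Y hX hXbdd hXcentered
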